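/- arXiv:2411.11549 — 5 statements merged into one kernel-verified Lean document; each statement's English description precedes it below -/
import Mathlib

section
/- Let S be a finite set, F, Z ⊆ S disjoint, S? = S \ (F ∪ Z), and P : S × S → ℝ a stochastic matrix. Define reach_k, stay_k as in the context and let g : S → [0,1] be any fixed point of the Bellman equations (g = 1 on F, g = 0 on Z, g(s) = ∑_{s'} P(s,s')·g(s') for s ∈ S?). Define the k-step staying kernel Q_k : S? × S? → ℝ by Q_0(s,s') = 1 if s' = s and 0 otherwise, and Q_{k+1}(s,s') = ∑_{t∈S?} P(s,t)·Q_k(t,s'). Then for all k and all s ∈ S?: (i) stay_k(s) = ∑_{s'∈S?} Q_k(s,s'); (ii) g(s) = reach_k(s) + ∑_{s'∈S?} Q_k(s,s')·g(s'); and consequently (iii) reach_k(s) + stay_k(s)·min_{s'∈S?} g(s') ≤ g(s) ≤ reach_k(s) + stay_k(s)·max_{s'∈S?} g(s') whenever S? is nonempty. -/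
structure MC (S : Type) [Fintype S] where
  P : S → S → ℝ
  nonneg : ∀ s s', 0 ≤ P s s'
  rowsum : ∀ s, ∑ s', P s s' = 1

/-!
Both `stay_k` and `g - reach_k` satisfy the one-step recursion `u_{k+1}(s) = ∑ P(s,t) u_k(t)` on
`S?` and vanish outside `S?` (on `F` both `g` and `reach_k` equal `1`, on `Z` both vanish). Unrolling
such a recursion `k` times through the staying kernel gives `u_k(s) = ∑_{s'∈S?} Q_k(s,s') u_0(s')`,
which is (i) and (ii). Since `Q_k ≥ 0`, (ii) is `reach_k(s)` plus a nonnegative combination of the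
values of `g` on `S?` with total weight `stay_k(s)`, which gives the bounds (iii).
-/

open Finset

section StayingKernel

variable {S : Type} [DecidableEq S] {U : Finset S} {P : S → S → ℝ} {Q : ℕ → S → S → ℝ}

theorem stayingKernel_nonneg (hP : ∀ s s', 0 ≤ P s s')
    (hQ0 : ∀ s s', Q 0 s s' = if s' = s then 1 else 0)
    (hQk : ∀ k s s', Q (k + 1) s s' = ∑ t ∈ U, P s t * Q k t s') :
    ∀ k s s', 0 ≤ Q k s s' := by
  intro k
  induction k with
  | zero => intro s s'; rw [hQ0]; positivity
  | succ k ih =>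
    intro s s'
    rw [hQk]
    exact sum_nonneg fun t _ => mul_nonneg (hP s t) (ih t s')

theorem eq_sum_stayingKernel_mul [Fintype S]
    (hQ0 : ∀ s s', Q 0 s s' = if s' = s then 1 else 0)
    (hQk : ∀ k s s', Q (k + 1) s s' = ∑ t ∈ U, P s t * Q k t s')
    (u : ℕ → S → ℝ) (hu_succ : ∀ k, ∀ s ∈ U, u (k + 1) s = ∑ t, P s t * u k t)
    (hu_compl : ∀ k, ∀ t ∉ U, u k t = 0) :
    ∀ k, ∀ s ∈ U, u k s = ∑ s' ∈ U, Q k s s' * u 0 s' := by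
  intro k
  induction k with
  | zero =>
    intro s hs
    simp only [hQ0, ite_mul, one_mul, zero_mul, sum_ite_eq', hs, if_true]
  | succ k ih =>
    intro s hs
    have hu_U : ∑ t, P s t * u k t = ∑ t ∈ U, P s t * u k t :=
      (sum_subset (subset_univ U) fun t _ ht => by rw [hu_compl k t ht, mul_zero]).symm
    calc u (k + 1) s
        = ∑ t ∈ U, P s t * ∑ s' ∈ U, Q k t s' * u 0 s' := by
          rw [hu_succ k s hs, hu_U]
          exact sum_congr rfl fun t ht => by rw [ih t ht]
      _ = ∑ s' ∈ U, (∑ t ∈ U, P s t * Q k t s') * u 0 s' := by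
          simp only [mul_sum, sum_mul, mul_assoc]
          exact sum_comm
      _ = ∑ s' ∈ U, Q (k + 1) s s' * u 0 s' := by simp only [hQk]

end StayingKernel

section WeightedAverage

variable {S : Type} {U : Finset S} {w : S → ℝ}

theorem sum_mul_inf'_le_sum_mul (h : U.Nonempty) (hw : ∀ s ∈ U, 0 ≤ w s) (g : S → ℝ) :
    (∑ s ∈ U, w s) * U.inf' h g ≤ ∑ s ∈ U, w s * g s := by
  rw [sum_mul]
  exact sum_le_sum fun s hs => mul_le_mul_of_nonneg_left (inf'_le g hs) (hw s hs)

theorem sum_mul_le_sum_mul_sup' (h : U.Nonempty) (hw : ∀ s ∈ U, 0 ≤ w s) (g : S → ℝ) :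
    ∑ s ∈ U, w s * g s ≤ (∑ s ∈ U, w s) * U.sup' h g := by
  rw [sum_mul]
  exact sum_le_sum fun s hs => mul_le_mul_of_nonneg_left (le_sup' g hs) (hw s hs)

end WeightedAverage

theorem svi_mc_decomposition_general {S : Type} [Fintype S] [DecidableEq S] (M : MC S)
    (F Z : Finset S)
    (SUnk : Finset S) (hSUnk : SUnk = Finset.univ \ (F ∪ Z))
    (reach stay : ℕ → S → ℝ)
    (hF : ∀ k, ∀ s ∈ F, reach k s = 1 ∧ stay k s = 0)
    (hZ : ∀ k, ∀ s ∈ Z, reach k s = 0 ∧ stay k s = 0)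
    (h0 : ∀ s ∈ SUnk, reach 0 s = 0 ∧ stay 0 s = 1)
    (hreach : ∀ k, ∀ s ∈ SUnk, reach (k + 1) s = ∑ s', M.P s s' * reach k s')
    (hstay : ∀ k, ∀ s ∈ SUnk, stay (k + 1) s = ∑ s', M.P s s' * stay k s')
    (g : S → ℝ)
    (hgF : ∀ s ∈ F, g s = 1) (hgZ : ∀ s ∈ Z, g s = 0)
    (hgU : ∀ s ∈ SUnk, g s = ∑ s', M.P s s' * g s')
    (Q : ℕ → S → S → ℝ)
    (hQ0 : ∀ s s', Q 0 s s' = if s' = s then 1 else 0)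
    (hQk : ∀ k s s', Q (k + 1) s s' = ∑ t ∈ SUnk, M.P s t * Q k t s') :
    ∀ k, ∀ s ∈ SUnk,
      (stay k s = ∑ s' ∈ SUnk, Q k s s') ∧
      (g s = reach k s + ∑ s' ∈ SUnk, Q k s s' * g s') ∧
      (∀ h : SUnk.Nonempty,
        reach k s + stay k s * SUnk.inf' h g ≤ g s ∧
          g s ≤ reach k s + stay k s * SUnk.sup' h g) := by
  intro k s hs
  have h_compl : ∀ t ∉ SUnk, t ∈ F ∨ t ∈ Z := by
    intro t ht
    simpa [hSUnk, or_iff_not_imp_left] using ht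
  have h_stay : stay k s = ∑ s' ∈ SUnk, Q k s s' := by
    rw [eq_sum_stayingKernel_mul hQ0 hQk stay hstay (fun k t ht => (h_compl t ht).elim
      (fun htF => (hF k t htF).2) (fun htZ => (hZ k t htZ).2)) k s hs]
    exact sum_congr rfl fun s' hs' => by rw [(h0 s' hs').2, mul_one]
  have h_gap : g s - reach k s = ∑ s' ∈ SUnk, Q k s s' * g s' := by
    refine (eq_sum_stayingKernel_mul hQ0 hQk (fun k t => g t - reach k t)
      (fun k t ht => ?_) (fun k t ht => ?_) k s hs).trans
      (sum_congr rfl fun s' hs' => by rw [(h0 s' hs').1, sub_zero])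
    · simp only [hgU t ht, hreach k t ht, ← sum_sub_distrib, mul_sub]
    · rcases h_compl t ht with htF | htZ
      · rw [hgF t htF, (hF k t htF).1, sub_self]
      · rw [hgZ t htZ, (hZ k t htZ).1, sub_self]
  have hQ_nonneg := stayingKernel_nonneg M.nonneg hQ0 hQk k s
  refine ⟨h_stay, by linarith, fun hne => ⟨?_, ?_⟩⟩
  · linarith [h_stay ▸ sum_mul_inf'_le_sum_mul hne (fun s' _ => hQ_nonneg s') g]
  · linarith [h_stay ▸ sum_mul_le_sum_mul_sup' hne (fun s' _ => hQ_nonneg s') g]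

/-- For a finite Markov chain partitioned into targets `F`, sinks `Z` and unknown
states `S? = S \ (F ∪ Z)`, with `reach_k`, `stay_k` the k-step reachability/staying
probabilities, `g` any Bellman fixed point with values in `[0,1]`, and `Q_k` the
k-step staying kernel: (i) `stay_k(s) = ∑_{s'∈S?} Q_k(s,s')`;
(ii) `g(s) = reach_k(s) + ∑_{s'∈S?} Q_k(s,s')·g(s')`; and (iii) whenever `S?` is
nonempty, `reach_k(s) + stay_k(s)·min_{S?} g ≤ g(s) ≤ reach_k(s) + stay_k(s)·max_{S?} g`. -/
theorem svi_mc_decomposition {S : Type} [Fintype S] [DecidableEq S] (M : MC S)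
    (F Z : Finset S) (hFZ : Disjoint F Z)
    (SUnk : Finset S) (hSUnk : SUnk = Finset.univ \ (F ∪ Z))
    (reach stay : ℕ → S → ℝ)
    (hF : ∀ k, ∀ s ∈ F, reach k s = 1 ∧ stay k s = 0)
    (hZ : ∀ k, ∀ s ∈ Z, reach k s = 0 ∧ stay k s = 0)
    (h0 : ∀ s ∈ SUnk, reach 0 s = 0 ∧ stay 0 s = 1)
    (hreach : ∀ k, ∀ s ∈ SUnk, reach (k + 1) s = ∑ s', M.P s s' * reach k s')
    (hstay : ∀ k, ∀ s ∈ SUnk, stay (k + 1) s = ∑ s', M.P s s' * stay k s')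
    (g : S → ℝ) (hg01 : ∀ s, g s ∈ Set.Icc (0 : ℝ) 1)
    (hgF : ∀ s ∈ F, g s = 1) (hgZ : ∀ s ∈ Z, g s = 0)
    (hgU : ∀ s ∈ SUnk, g s = ∑ s', M.P s s' * g s')
    (Q : ℕ → S → S → ℝ)
    (hQ0 : ∀ s s', Q 0 s s' = if s' = s then 1 else 0)
    (hQk : ∀ k s s', Q (k + 1) s s' = ∑ t ∈ SUnk, M.P s t * Q k t s') :
    ∀ k, ∀ s ∈ SUnk,
      (stay k s = ∑ s' ∈ SUnk, Q k s s') ∧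
      (g s = reach k s + ∑ s' ∈ SUnk, Q k s s' * g s') ∧
      (∀ h : SUnk.Nonempty,
        reach k s + stay k s * SUnk.inf' h g ≤ g s ∧
          g s ≤ reach k s + stay k s * SUnk.sup' h g) :=
  svi_mc_decomposition_general M F Z SUnk hSUnk reach stay hF hZ h0 hreach hstay g hgF hgZ hgU Q hQ0
    hQk
end

section
/- Let S be a finite set, F, Z ⊆ S disjoint, S? = S \ (F ∪ Z) nonempty, and P : S × S → ℝ a stochastic matrix, with reach_k, stay_k defined as in the context. Let g : S → [0,1] be any fixed point of the Bellman equations (g = 1 on F, g = 0 on Z, g(s) = ∑_{s'} P(s,s')·g(s') for s ∈ S?). If stay_k(s) < 1 for all s ∈ S?, then for every s' ∈ S?: min_{s∈S?} reach_k(s)/(1−stay_k(s)) ≤ g(s') ≤ max_{s∈S?} reach_k(s)/(1−stay_k(s)). -/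
/-!
Write `h_j^c := reach_j + c · stay_j`. On `S?` both `h_j^c` and the fixed point `g` evolve by
one application of `P`, and outside `S?` they agree, so positivity of `P` propagates an inequality
between them from step `0` to step `k`. Starting from `c = min_{S?} g` (resp. `max_{S?} g`) gives
`reach_k + stay_k · g(s) ≤ g(s)` at a minimiser `s` of `g` (resp. `≥` at a maximiser), which
rearranges to the two ratio bounds because `stay_k < 1`.
-/

namespace MC

variable {S : Type} [Fintype S] (M : MC S) (U : Finset S)

def StepsOn (u : ℕ → S → ℝ) : Prop :=
  ∀ j, ∀ s ∈ U, u (j + 1) s = ∑ s', M.P s s' * u j s'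

variable {M U}

theorem StepsOn.add_mul {u v : ℕ → S → ℝ} (hu : M.StepsOn U u) (hv : M.StepsOn U v) (c : ℝ) :
    M.StepsOn U fun j s => u j s + v j s * c := by
  intro j s hs
  simp only [hu j s hs, hv j s hs, Finset.sum_mul, ← Finset.sum_add_distrib, mul_add, mul_assoc]

theorem StepsOn.le {u w : ℕ → S → ℝ} (hu : M.StepsOn U u) (hw : M.StepsOn U w)
    (hout : ∀ j, ∀ s ∉ U, u j s ≤ w j s) (h0 : ∀ s ∈ U, u 0 s ≤ w 0 s) :
    ∀ j s, u j s ≤ w j s := by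
  intro j
  induction j with
  | zero =>
    intro s
    by_cases hs : s ∈ U
    · exact h0 s hs
    · exact hout 0 s hs
  | succ j ih =>
    intro s
    by_cases hs : s ∈ U
    · rw [hu j s hs, hw j s hs]
      exact Finset.sum_le_sum fun s' _ => mul_le_mul_of_nonneg_left (ih s') (M.nonneg s s')
    · exact hout (j + 1) s hs

end MC

theorem svi_mc_ratio_bounds_general {S : Type} [Fintype S] [DecidableEq S] (M : MC S)
    (F Z : Finset S)
    (SUnk : Finset S) (hSUnk : SUnk = Finset.univ \ (F ∪ Z))
    (hne : SUnk.Nonempty)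
    (reach stay : ℕ → S → ℝ)
    (hF : ∀ k, ∀ s ∈ F, reach k s = 1 ∧ stay k s = 0)
    (hZ : ∀ k, ∀ s ∈ Z, reach k s = 0 ∧ stay k s = 0)
    (h0 : ∀ s ∈ SUnk, reach 0 s = 0 ∧ stay 0 s = 1)
    (hreach : ∀ k, ∀ s ∈ SUnk, reach (k + 1) s = ∑ s', M.P s s' * reach k s')
    (hstay : ∀ k, ∀ s ∈ SUnk, stay (k + 1) s = ∑ s', M.P s s' * stay k s')
    (g : S → ℝ)
    (hgF : ∀ s ∈ F, g s = 1) (hgZ : ∀ s ∈ Z, g s = 0)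
    (hgU : ∀ s ∈ SUnk, g s = ∑ s', M.P s s' * g s')
    (k : ℕ) (hstaylt : ∀ s ∈ SUnk, stay k s < 1) :
    ∀ s' ∈ SUnk,
      SUnk.inf' hne (fun s => reach k s / (1 - stay k s)) ≤ g s' ∧
        g s' ≤ SUnk.sup' hne (fun s => reach k s / (1 - stay k s)) := by
  have hg : M.StepsOn SUnk fun _ => g := fun _ => hgU
  have hcomb (c : ℝ) : M.StepsOn SUnk fun j s => reach j s + stay j s * c :=
    MC.StepsOn.add_mul hreach hstay c
  have hout (j : ℕ) (c : ℝ) (s : S) (hs : s ∉ SUnk) : reach j s + stay j s * c = g s := by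
    have : s ∈ F ∨ s ∈ Z := by simpa [hSUnk, or_iff_not_imp_left] using hs
    rcases this with hsF | hsZ
    · simp [hF j s hsF, hgF s hsF]
    · simp [hZ j s hsZ, hgZ s hsZ]
  have hpos (s : S) (hs : s ∈ SUnk) : 0 < 1 - stay k s := sub_pos.2 (hstaylt s hs)
  obtain ⟨s₁, hs₁, hmin⟩ := Finset.exists_mem_eq_inf' hne g
  obtain ⟨s₂, hs₂, hmax⟩ := Finset.exists_mem_eq_sup' hne g
  have hlow : reach k s₁ + stay k s₁ * g s₁ ≤ g s₁ :=
    (hcomb (g s₁)).le hg (fun j s hs => (hout j _ s hs).le)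
      (fun s hs => by
        rw [(h0 s hs).1, (h0 s hs).2, zero_add, one_mul, ← hmin]; exact Finset.inf'_le g hs) k s₁
  have hup : g s₂ ≤ reach k s₂ + stay k s₂ * g s₂ :=
    hg.le (hcomb (g s₂)) (fun j s hs => (hout j _ s hs).ge)
      (fun s hs => by
        rw [(h0 s hs).1, (h0 s hs).2, zero_add, one_mul, ← hmax]; exact Finset.le_sup' g hs) k s₂
  intro s' hs'
  constructor
  · calc SUnk.inf' hne (fun s => reach k s / (1 - stay k s))
        ≤ reach k s₁ / (1 - stay k s₁) := Finset.inf'_le _ hs₁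
      _ ≤ g s₁ := by rw [div_le_iff₀ (hpos s₁ hs₁)]; linarith
      _ ≤ g s' := hmin ▸ Finset.inf'_le g hs'
  · calc g s' ≤ g s₂ := hmax ▸ Finset.le_sup' g hs'
      _ ≤ reach k s₂ / (1 - stay k s₂) := by rw [le_div_iff₀ (hpos s₂ hs₂)]; linarith
      _ ≤ SUnk.sup' hne (fun s => reach k s / (1 - stay k s)) :=
          Finset.le_sup' (fun s => reach k s / (1 - stay k s)) hs₂

/-- For a finite Markov chain partitioned into `F`, `Z`, `S? = S \ (F ∪ Z)` (nonempty),
with `reach_k`, `stay_k` as usual and `g` any Bellman fixed point in `[0,1]`: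
if `stay_k(s) < 1` for all `s ∈ S?`, then for every `s' ∈ S?`,
`min_{s∈S?} reach_k(s)/(1−stay_k(s)) ≤ g(s') ≤ max_{s∈S?} reach_k(s)/(1−stay_k(s))`. -/
theorem svi_mc_ratio_bounds {S : Type} [Fintype S] [DecidableEq S] (M : MC S)
    (F Z : Finset S) (hFZ : Disjoint F Z)
    (SUnk : Finset S) (hSUnk : SUnk = Finset.univ \ (F ∪ Z))
    (hne : SUnk.Nonempty)
    (reach stay : ℕ → S → ℝ)
    (hF : ∀ k, ∀ s ∈ F, reach k s = 1 ∧ stay k s = 0)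
    (hZ : ∀ k, ∀ s ∈ Z, reach k s = 0 ∧ stay k s = 0)
    (h0 : ∀ s ∈ SUnk, reach 0 s = 0 ∧ stay 0 s = 1)
    (hreach : ∀ k, ∀ s ∈ SUnk, reach (k + 1) s = ∑ s', M.P s s' * reach k s')
    (hstay : ∀ k, ∀ s ∈ SUnk, stay (k + 1) s = ∑ s', M.P s s' * stay k s')
    (g : S → ℝ) (hg01 : ∀ s, g s ∈ Set.Icc (0 : ℝ) 1)
    (hgF : ∀ s ∈ F, g s = 1) (hgZ : ∀ s ∈ Z, g s = 0)
    (hgU : ∀ s ∈ SUnk, g s = ∑ s', M.P s s' * g s')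
    (k : ℕ) (hstaylt : ∀ s ∈ SUnk, stay k s < 1) :
    ∀ s' ∈ SUnk,
      SUnk.inf' hne (fun s => reach k s / (1 - stay k s)) ≤ g s' ∧
        g s' ≤ SUnk.sup' hne (fun s => reach k s / (1 - stay k s)) :=
  svi_mc_ratio_bounds_general M F Z SUnk hSUnk hne reach stay hF hZ h0 hreach hstay g hgF hgZ hgU k
    hstaylt
end

section
/- (Sound value iteration for Markov chains, Theorem 2.2.) Let S be a finite set, F, Z ⊆ S disjoint, S? = S \ (F ∪ Z) nonempty, P : S × S → ℝ a stochastic matrix, reach_k and stay_k defined as in the context, and V the value (least fixed point of the Bellman equations). Let k ≥ 0 be such that stay_k(s) < 1 for all s ∈ S?. Set l_k = min_{s'∈S?} reach_k(s')/(1−stay_k(s')) and u_k = max_{s'∈S?} reach_k(s')/(1−stay_k(s')). Then for every s ∈ S?: reach_k(s) + stay_k(s)·l_k ≤ V(s) ≤ reach_k(s) + stay_k(s)·u_k. -/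
/-!
Both `n ↦ reach_n + stay_n · c` and the constant sequence `V` are orbits of the same monotone
Bellman step on `S?` and agree off `S?`. Starting from `c = min_{S?} V` (resp. `max_{S?} V`)
the first lies below (resp. above) `V` at time 0, hence at every time `k`. Evaluated at a state
`t` where `V` attains that minimum `m`, this reads `reach_k(t) + stay_k(t)·m ≤ m`, i.e.
`reach_k(t)/(1 − stay_k(t)) ≤ m`, so `l_k ≤ m`; dually `max_{S?} V ≤ u_k`.
-/

namespace MC

variable {S : Type} [Fintype S] (M : MC S)

theorem iterate_le_of_le (U : Finset S) {f g : ℕ → S → ℝ}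
    (hf : ∀ n, ∀ t ∈ U, f (n + 1) t = ∑ s', M.P t s' * f n s')
    (hg : ∀ n, ∀ t ∈ U, g (n + 1) t = ∑ s', M.P t s' * g n s')
    (hout : ∀ n, ∀ t ∉ U, f n t ≤ g n t) (h0 : ∀ t ∈ U, f 0 t ≤ g 0 t) :
    ∀ n t, f n t ≤ g n t := by
  intro n
  induction n with
  | zero => intro t; by_cases ht : t ∈ U <;> simp_all
  | succ n ih =>
    intro t
    by_cases ht : t ∈ U
    · rw [hf n t ht, hg n t ht]
      exact Finset.sum_le_sum fun s' _ => mul_le_mul_of_nonneg_left (ih s') (M.nonneg t s')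
    · exact hout (n + 1) t ht

theorem affine_iterate_step {U : Finset S} {reach stay : ℕ → S → ℝ}
    (hreach : ∀ n, ∀ t ∈ U, reach (n + 1) t = ∑ s', M.P t s' * reach n s')
    (hstay : ∀ n, ∀ t ∈ U, stay (n + 1) t = ∑ s', M.P t s' * stay n s') (c : ℝ) :
    ∀ n, ∀ t ∈ U, reach (n + 1) t + stay (n + 1) t * c
      = ∑ s', M.P t s' * (reach n s' + stay n s' * c) := by
  intro n t ht
  simp only [hreach n t ht, hstay n t ht, Finset.sum_mul, mul_add, mul_assoc,
    Finset.sum_add_distrib]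

theorem iterate_nonneg (U : Finset S) {f : ℕ → S → ℝ}
    (hf : ∀ n, ∀ t ∈ U, f (n + 1) t = ∑ s', M.P t s' * f n s')
    (hout : ∀ n, ∀ t ∉ U, 0 ≤ f n t) (h0 : ∀ t ∈ U, 0 ≤ f 0 t) : ∀ n t, 0 ≤ f n t :=
  M.iterate_le_of_le U (f := fun _ _ => 0) (by simp) hf hout h0

section ValueBounds

variable {U : Finset S} {reach stay : ℕ → S → ℝ} {V : S → ℝ}

theorem reach_add_stay_mul_le
    (hreach : ∀ n, ∀ t ∈ U, reach (n + 1) t = ∑ s', M.P t s' * reach n s')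
    (hstay : ∀ n, ∀ t ∈ U, stay (n + 1) t = ∑ s', M.P t s' * stay n s')
    (hV : ∀ t ∈ U, V t = ∑ s', M.P t s' * V s')
    (hreach_off : ∀ n, ∀ t ∉ U, reach n t = V t) (hstay_off : ∀ n, ∀ t ∉ U, stay n t = 0)
    (h0 : ∀ t ∈ U, reach 0 t = 0 ∧ stay 0 t = 1) {c : ℝ} (hc : ∀ t ∈ U, c ≤ V t) :
    ∀ n t, reach n t + stay n t * c ≤ V t :=
  M.iterate_le_of_le U (M.affine_iterate_step hreach hstay c) (fun _ => hV)
    (fun n t ht => by simp [hreach_off n t ht, hstay_off n t ht])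
    (fun t ht => by simpa [(h0 t ht).1, (h0 t ht).2] using hc t ht)

theorem le_reach_add_stay_mul
    (hreach : ∀ n, ∀ t ∈ U, reach (n + 1) t = ∑ s', M.P t s' * reach n s')
    (hstay : ∀ n, ∀ t ∈ U, stay (n + 1) t = ∑ s', M.P t s' * stay n s')
    (hV : ∀ t ∈ U, V t = ∑ s', M.P t s' * V s')
    (hreach_off : ∀ n, ∀ t ∉ U, reach n t = V t) (hstay_off : ∀ n, ∀ t ∉ U, stay n t = 0)
    (h0 : ∀ t ∈ U, reach 0 t = 0 ∧ stay 0 t = 1) {c : ℝ} (hc : ∀ t ∈ U, V t ≤ c) :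
    ∀ n t, V t ≤ reach n t + stay n t * c :=
  M.iterate_le_of_le U (fun _ => hV) (M.affine_iterate_step hreach hstay c)
    (fun n t ht => by simp [hreach_off n t ht, hstay_off n t ht])
    (fun t ht => by simpa [(h0 t ht).1, (h0 t ht).2] using hc t ht)

end ValueBounds

end MC

theorem div_one_sub_le_of_add_mul_le {r s m : ℝ} (hs : s < 1) (h : r + s * m ≤ m) :
    r / (1 - s) ≤ m := by
  rw [div_le_iff₀ (by linarith)]
  linarith

theorem le_div_one_sub_of_le_add_mul {r s m : ℝ} (hs : s < 1) (h : m ≤ r + s * m) :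
    m ≤ r / (1 - s) := by
  rw [le_div_iff₀ (by linarith)]
  linarith

theorem svi_mc_sound_value_iteration_general {S : Type} [Fintype S] [DecidableEq S] (M : MC S)
    (F Z : Finset S)
    (SUnk : Finset S) (hSUnk : SUnk = Finset.univ \ (F ∪ Z))
    (hne : SUnk.Nonempty)
    (reach stay : ℕ → S → ℝ)
    (hF : ∀ k, ∀ s ∈ F, reach k s = 1 ∧ stay k s = 0)
    (hZ : ∀ k, ∀ s ∈ Z, reach k s = 0 ∧ stay k s = 0)
    (h0 : ∀ s ∈ SUnk, reach 0 s = 0 ∧ stay 0 s = 1)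
    (hreach : ∀ k, ∀ s ∈ SUnk, reach (k + 1) s = ∑ s', M.P s s' * reach k s')
    (hstay : ∀ k, ∀ s ∈ SUnk, stay (k + 1) s = ∑ s', M.P s s' * stay k s')
    (V : S → ℝ)
    (hVF : ∀ s ∈ F, V s = 1) (hVZ : ∀ s ∈ Z, V s = 0)
    (hVU : ∀ s ∈ SUnk, V s = ∑ s', M.P s s' * V s')
    (k : ℕ) (hstaylt : ∀ s ∈ SUnk, stay k s < 1) :
    ∀ s ∈ SUnk,
      reach k s + stay k s * SUnk.inf' hne (fun s' => reach k s' / (1 - stay k s')) ≤ V s ∧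
        V s ≤ reach k s + stay k s * SUnk.sup' hne (fun s' => reach k s' / (1 - stay k s')) := by
  have hoff : ∀ n, ∀ t ∉ SUnk, reach n t = V t ∧ stay n t = 0 := by
    intro n t ht
    simp only [hSUnk, Finset.mem_sdiff, Finset.mem_univ, Finset.mem_union, true_and,
      not_not] at ht
    rcases ht with h | h
    · exact ⟨(hF n t h).1.trans (hVF t h).symm, (hF n t h).2⟩
    · exact ⟨(hZ n t h).1.trans (hVZ t h).symm, (hZ n t h).2⟩
  have hreach_off n t ht := (hoff n t ht).1
  have hstay_off n t ht := (hoff n t ht).2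
  have hstay_nonneg : ∀ t, 0 ≤ stay k t :=
    M.iterate_nonneg SUnk hstay (fun n t ht => (hstay_off n t ht).ge)
      (fun t ht => (h0 t ht).2 ▸ zero_le_one) k
  obtain ⟨tmin, htmin, hmin⟩ := SUnk.exists_min_image V hne
  obtain ⟨tmax, htmax, hmax⟩ := SUnk.exists_max_image V hne
  have hlower := M.reach_add_stay_mul_le hreach hstay hVU hreach_off hstay_off h0 hmin k
  have hupper := M.le_reach_add_stay_mul hreach hstay hVU hreach_off hstay_off h0 hmax k
  have hl : SUnk.inf' hne (fun s' => reach k s' / (1 - stay k s')) ≤ V tmin :=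
    Finset.inf'_le_of_le _ htmin
      (div_one_sub_le_of_add_mul_le (hstaylt tmin htmin) (hlower tmin))
  have hu : V tmax ≤ SUnk.sup' hne (fun s' => reach k s' / (1 - stay k s')) :=
    Finset.le_sup'_of_le _ htmax
      (le_div_one_sub_of_le_add_mul (hstaylt tmax htmax) (hupper tmax))
  intro s _
  have := hstay_nonneg s
  exact ⟨le_trans (by gcongr) (hlower s), (hupper s).trans (by gcongr)⟩

/-- Sound value iteration for Markov chains (Thm. 2.2): for a finite Markov chain
partitioned into `F`, `Z`, `S? = S \ (F ∪ Z)` (nonempty), with `reach_k`, `stay_k`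
as usual and `V` the value (least Bellman fixed point in `[0,1]`): if
`stay_k(s) < 1` for all `s ∈ S?`, then with
`l_k = min_{s'∈S?} reach_k(s')/(1−stay_k(s'))` and
`u_k = max_{s'∈S?} reach_k(s')/(1−stay_k(s'))`, every `s ∈ S?` satisfies
`reach_k(s) + stay_k(s)·l_k ≤ V(s) ≤ reach_k(s) + stay_k(s)·u_k`. -/
theorem svi_mc_sound_value_iteration {S : Type} [Fintype S] [DecidableEq S] (M : MC S)
    (F Z : Finset S) (hFZ : Disjoint F Z)
    (SUnk : Finset S) (hSUnk : SUnk = Finset.univ \ (F ∪ Z))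
    (hne : SUnk.Nonempty)
    (reach stay : ℕ → S → ℝ)
    (hF : ∀ k, ∀ s ∈ F, reach k s = 1 ∧ stay k s = 0)
    (hZ : ∀ k, ∀ s ∈ Z, reach k s = 0 ∧ stay k s = 0)
    (h0 : ∀ s ∈ SUnk, reach 0 s = 0 ∧ stay 0 s = 1)
    (hreach : ∀ k, ∀ s ∈ SUnk, reach (k + 1) s = ∑ s', M.P s s' * reach k s')
    (hstay : ∀ k, ∀ s ∈ SUnk, stay (k + 1) s = ∑ s', M.P s s' * stay k s')
    (V : S → ℝ) (hV01 : ∀ s, V s ∈ Set.Icc (0 : ℝ) 1)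
    (hVF : ∀ s ∈ F, V s = 1) (hVZ : ∀ s ∈ Z, V s = 0)
    (hVU : ∀ s ∈ SUnk, V s = ∑ s', M.P s s' * V s')
    (hVleast : ∀ g : S → ℝ, (∀ s, g s ∈ Set.Icc (0 : ℝ) 1) →
      (∀ s ∈ F, g s = 1) → (∀ s ∈ Z, g s = 0) →
      (∀ s ∈ SUnk, g s = ∑ s', M.P s s' * g s') → ∀ s, V s ≤ g s)
    (k : ℕ) (hstaylt : ∀ s ∈ SUnk, stay k s < 1) :
    ∀ s ∈ SUnk,
      reach k s + stay k s * SUnk.inf' hne (fun s' => reach k s' / (1 - stay k s')) ≤ V s ∧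
        V s ≤ reach k s + stay k s * SUnk.sup' hne (fun s' => reach k s' / (1 - stay k s')) :=
  svi_mc_sound_value_iteration_general M F Z SUnk hSUnk hne reach stay hF hZ h0 hreach hstay V hVF
    hVZ hVU k hstaylt
end

section
/- (Static-bounds correctness, Lemma A.1.) Fix a finite stochastic game with partition (F, Z, S?) and value V = lfp B, and fix constants l, u ∈ [0,1] with l ≤ V(s) ≤ u for all s ∈ S?. Define reach_k, stay_k : S → ℝ recursively: reach_k = 1 and stay_k = 0 on F for all k; reach_k = stay_k = 0 on Z for all k; reach_0 = 0 and stay_0 = 1 on S?; and for each k and each s ∈ S?, choose any action α_{k+1}(s) ∈ Av(s) that maximizes a ↦ ∑_{s'} δ(s,a,s')·(reach_k(s') + stay_k(s')·u) over Av(s) if s ∈ S_Box, and minimizes a ↦ ∑_{s'} δ(s,a,s')·(reach_k(s') + stay_k(s')·l) if s ∈ S_Circ; then set reach_{k+1}(s) = ∑_{s'} δ(s,α_{k+1}(s),s')·reach_k(s') and stay_{k+1}(s) = ∑_{s'} δ(s,α_{k+1}(s),s')·stay_k(s'). Then for every k ≥ 0 and every s ∈ S?: reach_k(s) + stay_k(s)·l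 ≤ V(s) ≤ reach_k(s) + stay_k(s)·u. -/
/-- A finite (turn-based simple) stochastic game with a partition of the state
space into Maximizer states `SBox` (the rest being Minimizer states), target
states `F`, sink states `Z`, and the remaining unknown states `S \ (F ∪ Z)`. -/
structure SG (S A : Type) [Fintype S] [DecidableEq S] where
  /-- Maximizer states; all other states belong to Minimizer. -/
  SBox : Finset S
  /-- Target states. -/
  F : Finset S
  /-- Sink states. -/
  Z : Finset S
  hFZ : Disjoint F Z
  /-- Available actions (a nonempty finite set in each state). -/
  Av : S → Finset A
  Av_ne : ∀ s, (Av s).Nonempty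
  /-- Transition probabilities. -/
  δ : S → A → S → ℝ
  δ_nonneg : ∀ s a s', 0 ≤ δ s a s'
  δ_sum : ∀ s, ∀ a ∈ Av s, ∑ s', δ s a s' = 1

namespace SG

variable {S A : Type} [Fintype S] [DecidableEq S]

/-- The unknown states `S? = S \ (F ∪ Z)`. -/
def SUnk (G : SG S A) : Finset S := Finset.univ \ (G.F ∪ G.Z)

/-- The Bellman operator: `1` on targets, `0` on sinks, max over available actions
in Maximizer states and min over available actions in Minimizer states. -/
noncomputable def bellman (G : SG S A) (g : S → ℝ) : S → ℝ := fun s =>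
  if s ∈ G.F then 1
  else if s ∈ G.Z then 0
  else if s ∈ G.SBox then (G.Av s).sup' (G.Av_ne s) fun a => ∑ s', G.δ s a s' * g s'
  else (G.Av s).inf' (G.Av_ne s) fun a => ∑ s', G.δ s a s' * g s'

/-- `V` is the value of the game: the least fixed point of the Bellman operator
among functions `S → [0,1]`. -/
def IsValue (G : SG S A) (V : S → ℝ) : Prop :=
  (∀ s, V s ∈ Set.Icc (0 : ℝ) 1) ∧ G.bellman V = V ∧
    ∀ g : S → ℝ, (∀ s, g s ∈ Set.Icc (0 : ℝ) 1) → G.bellman g = g → ∀ s, V s ≤ g s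

/-- `T` is an end component: there is a nonempty set of actions `B'` available in `T`
that stays inside `T`, and using which every state of `T` can reach every other. -/
def IsEC (G : SG S A) (T : Set S) : Prop :=
  T.Nonempty ∧ ∃ B' : Set A, B'.Nonempty ∧ (B' ⊆ ⋃ s ∈ T, (G.Av s : Set A)) ∧
    (∀ s ∈ T, ∀ a ∈ B', a ∈ G.Av s → ∀ s', 0 < G.δ s a s' → s' ∈ T) ∧
    (∀ s ∈ T, ∀ s' ∈ T, Relation.ReflTransGen
      (fun x y => x ∈ T ∧ ∃ a ∈ B', a ∈ G.Av x ∧ 0 < G.δ x a y) s s')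

end SG

/-!
Induction on `k`. Write `lo_k = reach_k + stay_k·l` and `hi_k = reach_k + stay_k·u`; by the
recursion, `lo_{k+1}(s)` and `hi_{k+1}(s)` are the one-step expectations of `lo_k` and `hi_k`
under `α_{k+1}(s)`. At a Maximizer state `V(s) = max_a V(s,a)`, so
`V(s) ≥ V(s,α) ≥ lo_k(s,α)`, and `V(s,a) ≤ hi_k(s,a) ≤ hi_k(s,α)` for every `a` by the choice
of `α`; Minimizer states are dual. On `F` and `Z` both bounds are equalities, and at `k = 0`
they are `l ≤ V ≤ u`.
-/

theorem Finset.sum_mul_add_mul_const {ι R : Type*} [Semiring R] (t : Finset ι)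
    (w r q : ι → R) (x : R) :
    ∑ i ∈ t, w i * (r i + q i * x) = ∑ i ∈ t, w i * r i + (∑ i ∈ t, w i * q i) * x := by
  simp only [mul_add, Finset.sum_add_distrib, Finset.sum_mul, mul_assoc]

namespace SG

variable {S A : Type} [Fintype S] [DecidableEq S] (G : SG S A)

theorem mem_SUnk_iff {s : S} : s ∈ G.SUnk ↔ s ∉ G.F ∧ s ∉ G.Z := by
  simp [SUnk]

theorem bellman_of_mem_F (g : S → ℝ) {s : S} (hs : s ∈ G.F) : G.bellman g s = 1 := by
  simp [bellman, hs]

theorem bellman_of_mem_Z (g : S → ℝ) {s : S} (hs : s ∈ G.Z) : G.bellman g s = 0 := by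
  have hsF : s ∉ G.F := Finset.disjoint_right.mp G.hFZ hs
  simp [bellman, hs, hsF]

theorem bellman_of_mem_SBox (g : S → ℝ) {s : S} (hs : s ∈ G.SUnk) (hB : s ∈ G.SBox) :
    G.bellman g s = (G.Av s).sup' (G.Av_ne s) fun a => ∑ s', G.δ s a s' * g s' := by
  obtain ⟨hsF, hsZ⟩ := G.mem_SUnk_iff.mp hs
  simp [bellman, hsF, hsZ, hB]

theorem bellman_of_not_mem_SBox (g : S → ℝ) {s : S} (hs : s ∈ G.SUnk) (hB : s ∉ G.SBox) :
    G.bellman g s = (G.Av s).inf' (G.Av_ne s) fun a => ∑ s', G.δ s a s' * g s' := by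
  obtain ⟨hsF, hsZ⟩ := G.mem_SUnk_iff.mp hs
  simp [bellman, hsF, hsZ, hB]

theorem sum_δ_mul_le_sum_δ_mul (s : S) (a : A) {f g : S → ℝ} (hfg : ∀ s', f s' ≤ g s') :
    ∑ s', G.δ s a s' * f s' ≤ ∑ s', G.δ s a s' * g s' :=
  Finset.sum_le_sum fun s' _ => mul_le_mul_of_nonneg_left (hfg s') (G.δ_nonneg s a s')

theorem bellman_fixedPoint_bounds_step {g lo hi : S → ℝ} (hfix : G.bellman g = g)
    (hlo : ∀ s', lo s' ≤ g s') (hhi : ∀ s', g s' ≤ hi s') {s : S} (hs : s ∈ G.SUnk)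
    {a : A} (ha : a ∈ G.Av s)
    (hmax : s ∈ G.SBox → ∀ b ∈ G.Av s,
      ∑ s', G.δ s b s' * hi s' ≤ ∑ s', G.δ s a s' * hi s')
    (hmin : s ∉ G.SBox → ∀ b ∈ G.Av s,
      ∑ s', G.δ s a s' * lo s' ≤ ∑ s', G.δ s b s' * lo s') :
    ∑ s', G.δ s a s' * lo s' ≤ g s ∧ g s ≤ ∑ s', G.δ s a s' * hi s' := by
  rw [← hfix]
  by_cases hB : s ∈ G.SBox
  · rw [G.bellman_of_mem_SBox g hs hB]
    refine ⟨(G.sum_δ_mul_le_sum_δ_mul s a hlo).trans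
      (Finset.le_sup' (fun b => ∑ s', G.δ s b s' * g s') ha), ?_⟩
    exact Finset.sup'_le _ _ fun b hb =>
      (G.sum_δ_mul_le_sum_δ_mul s b hhi).trans (hmax hB b hb)
  · rw [G.bellman_of_not_mem_SBox g hs hB]
    refine ⟨Finset.le_inf' _ _ fun b hb =>
      (hmin hB b hb).trans (G.sum_δ_mul_le_sum_δ_mul s b hlo), ?_⟩
    exact (Finset.inf'_le _ ha).trans (G.sum_δ_mul_le_sum_δ_mul s a hhi)

end SG

theorem svi_static_bounds_correct_general {S A : Type} [Fintype S] [DecidableEq S]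
    (G : SG S A) (V : S → ℝ) (hV : G.IsValue V)
    (l u : ℝ)
    (hlu : ∀ s ∈ G.SUnk, l ≤ V s ∧ V s ≤ u)
    (reach stay : ℕ → S → ℝ) (α : ℕ → S → A)
    (hF : ∀ k, ∀ s ∈ G.F, reach k s = 1 ∧ stay k s = 0)
    (hZ : ∀ k, ∀ s ∈ G.Z, reach k s = 0 ∧ stay k s = 0)
    (h0 : ∀ s ∈ G.SUnk, reach 0 s = 0 ∧ stay 0 s = 1)
    (hαAv : ∀ k, ∀ s ∈ G.SUnk, α (k + 1) s ∈ G.Av s)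
    (hαmax : ∀ k, ∀ s ∈ G.SUnk, s ∈ G.SBox → ∀ a ∈ G.Av s,
      ∑ s', G.δ s a s' * (reach k s' + stay k s' * u) ≤
        ∑ s', G.δ s (α (k + 1) s) s' * (reach k s' + stay k s' * u))
    (hαmin : ∀ k, ∀ s ∈ G.SUnk, s ∉ G.SBox → ∀ a ∈ G.Av s,
      ∑ s', G.δ s (α (k + 1) s) s' * (reach k s' + stay k s' * l) ≤
        ∑ s', G.δ s a s' * (reach k s' + stay k s' * l))
    (hreach : ∀ k, ∀ s ∈ G.SUnk,
      reach (k + 1) s = ∑ s', G.δ s (α (k + 1) s) s' * reach k s')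
    (hstay : ∀ k, ∀ s ∈ G.SUnk,
      stay (k + 1) s = ∑ s', G.δ s (α (k + 1) s) s' * stay k s') :
    ∀ k, ∀ s ∈ G.SUnk,
      reach k s + stay k s * l ≤ V s ∧ V s ≤ reach k s + stay k s * u := by
  obtain ⟨-, hfix, -⟩ := hV
  have boundary : ∀ k, ∀ s ∉ G.SUnk,
      reach k s + stay k s * l ≤ V s ∧ V s ≤ reach k s + stay k s * u := by
    intro k s hs
    by_cases hsF : s ∈ G.F
    · obtain ⟨hr, hst⟩ := hF k s hsF
      simp [hr, hst, ← congrFun hfix s, G.bellman_of_mem_F V hsF]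
    · have hsZ : s ∈ G.Z := by simpa [G.mem_SUnk_iff, hsF] using hs
      obtain ⟨hr, hst⟩ := hZ k s hsZ
      simp [hr, hst, ← congrFun hfix s, G.bellman_of_mem_Z V hsZ]
  intro k
  induction k with
  | zero =>
    intro s hs
    simp only [h0 s hs, zero_add, one_mul]
    exact hlu s hs
  | succ k ih =>
    intro s hs
    have hbounds : ∀ s',
        reach k s' + stay k s' * l ≤ V s' ∧ V s' ≤ reach k s' + stay k s' * u :=
      fun s' => if hs' : s' ∈ G.SUnk then ih s' hs' else boundary k s' hs'
    have step := G.bellman_fixedPoint_bounds_step hfix (fun s' => (hbounds s').1)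
      (fun s' => (hbounds s').2) hs (hαAv k s hs) (hαmax k s hs) (hαmin k s hs)
    simpa only [Finset.sum_mul_add_mul_const, hreach k s hs, hstay k s hs] using step

/-- Static-bounds correctness (Lem. A.1): given constants `l ≤ V ≤ u` on `S?` and the
SVI recursion for `reach_k`, `stay_k` with `(k+1)`-st actions chosen to maximize
(Maximizer states) resp. minimize (Minimizer states) `reach_k + stay_k·u` resp.
`reach_k + stay_k·l`, we have
`reach_k(s) + stay_k(s)·l ≤ V(s) ≤ reach_k(s) + stay_k(s)·u` for all `k` and `s ∈ S?`. -/
theorem svi_static_bounds_correct {S A : Type} [Fintype S] [DecidableEq S]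
    (G : SG S A) (V : S → ℝ) (hV : G.IsValue V)
    (l u : ℝ) (hl01 : l ∈ Set.Icc (0 : ℝ) 1) (hu01 : u ∈ Set.Icc (0 : ℝ) 1)
    (hlu : ∀ s ∈ G.SUnk, l ≤ V s ∧ V s ≤ u)
    (reach stay : ℕ → S → ℝ) (α : ℕ → S → A)
    (hF : ∀ k, ∀ s ∈ G.F, reach k s = 1 ∧ stay k s = 0)
    (hZ : ∀ k, ∀ s ∈ G.Z, reach k s = 0 ∧ stay k s = 0)
    (h0 : ∀ s ∈ G.SUnk, reach 0 s = 0 ∧ stay 0 s = 1)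
    (hαAv : ∀ k, ∀ s ∈ G.SUnk, α (k + 1) s ∈ G.Av s)
    (hαmax : ∀ k, ∀ s ∈ G.SUnk, s ∈ G.SBox → ∀ a ∈ G.Av s,
      ∑ s', G.δ s a s' * (reach k s' + stay k s' * u) ≤
        ∑ s', G.δ s (α (k + 1) s) s' * (reach k s' + stay k s' * u))
    (hαmin : ∀ k, ∀ s ∈ G.SUnk, s ∉ G.SBox → ∀ a ∈ G.Av s,
      ∑ s', G.δ s (α (k + 1) s) s' * (reach k s' + stay k s' * l) ≤
        ∑ s', G.δ s a s' * (reach k s' + stay k s' * l))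
    (hreach : ∀ k, ∀ s ∈ G.SUnk,
      reach (k + 1) s = ∑ s', G.δ s (α (k + 1) s) s' * reach k s')
    (hstay : ∀ k, ∀ s ∈ G.SUnk,
      stay (k + 1) s = ∑ s', G.δ s (α (k + 1) s) s' * stay k s') :
    ∀ k, ∀ s ∈ G.SUnk,
      reach k s + stay k s * l ≤ V s ∧ V s ≤ reach k s + stay k s * u :=
  svi_static_bounds_correct_general G V hV l u hlu reach stay α hF hZ h0 hαAv hαmax hαmin hreach
    hstay
end

section
/- (Trap end components have value zero.) Fix a finite stochastic game with partition (F, Z, S?) and value V = lfp B. Let T ⊆ S? be an end component such that T has no Maximizer exit, i.e., for every s ∈ T ∩ S_Box and every a ∈ Av(s) we have Post(s,a) ⊆ T. Then V(s) = 0 for every s ∈ T. -/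
/-! Since `V` is the least fixed point of `B` in `[0,1]^S`, it suffices to find a fixed point of
`B` in `[0,1]^S` that vanishes on `T`. Knaster–Tarski gives a fixed point `g` of the operator
`f ↦ 1_{Tᶜ} · B f`, which turns `T` into sinks. Then `B g = 0` on `T` as well: every Maximizer
action from `T` stays in `T`, and in each Minimizer state of `T` some action of the end
component stays in `T`. -/

theorem exists_fixedPoint_mem_Icc {α : Type*} [ConditionallyCompleteLattice α] {a b : α}
    (hab : a ≤ b) {f : α → α} (hf : Monotone f)
    (hmaps : Set.MapsTo f (Set.Icc a b) (Set.Icc a b)) :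
    ∃ x ∈ Set.Icc a b, f x = x := by
  have : Fact (a ≤ b) := ⟨hab⟩
  let F : Set.Icc a b →o Set.Icc a b := ⟨hmaps.restrict f _ _, fun _ _ h => hf h⟩
  exact ⟨F.lfp, F.lfp.2, congrArg Subtype.val F.map_lfp⟩

namespace SG

variable {S A : Type} [Fintype S] [DecidableEq S] (G : SG S A)

theorem sum_δ_mul_mono (s : S) (a : A) : Monotone fun f : S → ℝ => ∑ s', G.δ s a s' * f s' :=
  fun _ _ hfg => Finset.sum_le_sum fun s' _ =>
    mul_le_mul_of_nonneg_left (hfg s') (G.δ_nonneg s a s')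

theorem sum_δ_mul_mem_Icc {f : S → ℝ} (hf : f ∈ Set.Icc 0 1) {s : S} {a : A} (ha : a ∈ G.Av s) :
    ∑ s', G.δ s a s' * f s' ∈ Set.Icc (0 : ℝ) 1 := by
  refine ⟨Finset.sum_nonneg fun s' _ => mul_nonneg (G.δ_nonneg s a s') (hf.1 s'), ?_⟩
  calc ∑ s', G.δ s a s' * f s' ≤ ∑ s', G.δ s a s' * 1 := G.sum_δ_mul_mono s a hf.2
    _ = 1 := by simpa using G.δ_sum s a ha

theorem sum_δ_mul_eq_zero {T : Set S} {f : S → ℝ} (hf : ∀ t ∈ T, f t = 0) {s : S} {a : A}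
    (hpost : ∀ s', 0 < G.δ s a s' → s' ∈ T) : ∑ s', G.δ s a s' * f s' = 0 := by
  refine Finset.sum_eq_zero fun s' _ => ?_
  rcases (G.δ_nonneg s a s').lt_or_eq with hpos | hzero
  · rw [hf s' (hpost s' hpos), mul_zero]
  · rw [← hzero, zero_mul]

theorem bellman_mono : Monotone G.bellman := by
  intro f g hfg s
  unfold bellman
  split_ifs
  · exact le_rfl
  · exact le_rfl
  · exact Finset.sup'_mono_fun fun a _ => G.sum_δ_mul_mono s a hfg
  · exact Finset.inf'_mono_fun fun a _ => G.sum_δ_mul_mono s a hfg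

theorem bellman_mapsTo_Icc : Set.MapsTo G.bellman (Set.Icc 0 1) (Set.Icc 0 1) := by
  intro f hf
  have hsum := fun s a (ha : a ∈ G.Av s) => G.sum_δ_mul_mem_Icc hf ha
  suffices ∀ s, G.bellman f s ∈ Set.Icc (0 : ℝ) 1 from
    ⟨fun s => (this s).1, fun s => (this s).2⟩
  intro s
  obtain ⟨a, ha⟩ := G.Av_ne s
  unfold bellman
  split_ifs
  · simp
  · simp
  · exact ⟨(hsum s a ha).1.trans (Finset.le_sup' (fun b => ∑ s', G.δ s b s' * f s') ha),
      Finset.sup'_le _ _ fun b hb => (hsum s b hb).2⟩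
  · exact ⟨Finset.le_inf' _ _ fun b hb => (hsum s b hb).1,
      (Finset.inf'_le _ ha).trans (hsum s a ha).2⟩

theorem IsEC.exists_mem_Av_post_subset {G : SG S A} {T : Set S} (hEC : G.IsEC T) {s : S}
    (hs : s ∈ T) : ∃ a ∈ G.Av s, ∀ s', 0 < G.δ s a s' → s' ∈ T := by
  obtain ⟨-, B', ⟨a, haB⟩, hB'sub, hB'stay, hB'conn⟩ := hEC
  obtain ⟨t, ht, hat⟩ := Set.mem_iUnion₂.mp (hB'sub haB)
  rcases (hB'conn s hs t ht).cases_head with rfl | ⟨-, ⟨-, b, hbB, hb, -⟩, -⟩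
  · exact ⟨a, hat, hB'stay s hs a haB hat⟩
  · exact ⟨b, hb, hB'stay s hs b hbB hb⟩

theorem bellman_eq_zero_of_post_subset {T : Set S} {g : S → ℝ} (hg : 0 ≤ g)
    (hgT : ∀ t ∈ T, g t = 0) {s : S} (hs : s ∈ G.SUnk)
    (hstay : ∃ a ∈ G.Av s, ∀ s', 0 < G.δ s a s' → s' ∈ T)
    (htrap : s ∈ G.SBox → ∀ a ∈ G.Av s, ∀ s', 0 < G.δ s a s' → s' ∈ T) :
    G.bellman g s = 0 := by
  simp only [SUnk, Finset.mem_sdiff, Finset.mem_union, not_or] at hs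
  obtain ⟨a, ha, hpost⟩ := hstay
  have hsum := fun {b} => G.sum_δ_mul_eq_zero hgT (s := s) (a := b)
  unfold bellman
  rw [if_neg hs.2.1, if_neg hs.2.2]
  split_ifs with hmax
  · exact le_antisymm (Finset.sup'_le _ _ fun b hb => (hsum (htrap hmax b hb)).le)
      ((hsum hpost).ge.trans (Finset.le_sup' (fun b => ∑ s', G.δ s b s' * g s') ha))
  · exact le_antisymm ((Finset.inf'_le _ ha).trans (hsum hpost).le)
      (Finset.le_inf' _ _ fun b _ =>
        Finset.sum_nonneg fun s' _ => mul_nonneg (G.δ_nonneg s b s') (hg s'))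

theorem exists_bellman_fixedPoint_eq_zero_on {T : Set S} (hTsub : T ⊆ G.SUnk) (hEC : G.IsEC T)
    (htrap : ∀ s ∈ T, s ∈ G.SBox → ∀ a ∈ G.Av s, ∀ s', 0 < G.δ s a s' → s' ∈ T) :
    ∃ g ∈ Set.Icc (0 : S → ℝ) 1, G.bellman g = g ∧ ∀ s ∈ T, g s = 0 := by
  have hmono : Monotone fun f => Tᶜ.indicator (G.bellman f) :=
    fun f f' hff' s => Set.indicator_le_indicator (G.bellman_mono hff' s)
  have hmaps : Set.MapsTo (fun f => Tᶜ.indicator (G.bellman f)) (Set.Icc 0 1) (Set.Icc 0 1) := by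
    intro f hf
    have hBf := G.bellman_mapsTo_Icc hf
    exact ⟨Set.indicator_nonneg fun s _ => hBf.1 s,
      Set.indicator_le' (fun s _ => hBf.2 s) fun _ _ => zero_le_one⟩
  obtain ⟨g, hg, hfix⟩ := exists_fixedPoint_mem_Icc zero_le_one hmono hmaps
  have hgT : ∀ s ∈ T, g s = 0 := fun s hs => by
    rw [← hfix]
    exact Set.indicator_of_notMem (Set.notMem_compl_iff.mpr hs) _
  refine ⟨g, hg, funext fun s => ?_, hgT⟩
  by_cases hs : s ∈ T
  · rw [hgT s hs]
    exact G.bellman_eq_zero_of_post_subset hg.1 hgT (hTsub hs) (hEC.exists_mem_Av_post_subset hs)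
      (htrap s hs)
  · conv_rhs => rw [← hfix]
    exact (Set.indicator_of_mem hs _).symm

end SG

/-- Trap end components have value zero: if `T ⊆ S?` is an end component with no
Maximizer exit (every action of every Maximizer state of `T` stays inside `T`),
then the value `V = lfp B` is `0` on `T`. -/
theorem svi_trap_ec_value_zero {S A : Type} [Fintype S] [DecidableEq S]
    (G : SG S A) (V : S → ℝ) (hV : G.IsValue V)
    (T : Set S) (hTsub : T ⊆ (↑G.SUnk : Set S)) (hEC : G.IsEC T)
    (htrap : ∀ s ∈ T, s ∈ G.SBox → ∀ a ∈ G.Av s, ∀ s', 0 < G.δ s a s' → s' ∈ T) :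
    ∀ s ∈ T, V s = 0 := by
  obtain ⟨g, hg, hfix, hgT⟩ := G.exists_bellman_fixedPoint_eq_zero_on hTsub hEC htrap
  intro s hs
  refine le_antisymm ?_ (hV.1 s).1
  calc V s ≤ g s := hV.2.2 g (fun t => ⟨hg.1 t, hg.2 t⟩) hfix s
    _ = 0 := hgT s hs
end
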